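/- arXiv:2205.06559 — 3 statements merged into one kernel-verified Lean document; each statement's English description precedes it below -/
import Mathlib

section
/- Let F be a field of characteristic different from 2 and let (C, n) be a Cayley algebra over F (an 8-dimensional unital composition algebra) with para-Hurwitz product x•y = x̄·ȳ (x̄ = b(x,1)·1 − x, b the polar form of n). Then the projection onto the first component, π₀: tri(C,•,n) → so(C,n), (d₀,d₁,d₂) ↦ d₀, is an isomorphism of Lie algebras: for every d₀ ∈ so(C,n) there exist unique d₁, d₂ ∈ so(C,n) such that d₀(x•y) = d₁(x)•y + x•d₂(y) for all x, y ∈ C. -/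
namespace ST16

open QuadraticMap LinearMap Module

set_option linter.unusedSectionVars false

variable {F : Type*} [Field F] {C : Type*} [NonAssocRing C] [Module F C]
  [SMulCommClass F C C] [IsScalarTower F C C]

section basic
variable (n : QuadraticForm F C)

/-- conjugation -/
def kap (x : C) : C := QuadraticMap.polar n x 1 • (1 : C) - x

/-- para-Hurwitz product -/
def bu (x y : C) : C := kap n x * kap n y

variable {n}
variable (hmul : ∀ x y : C, n (x * y) = n x * n y)
  (hnd : ∀ x : C, (∀ y : C, QuadraticMap.polar n x y = 0) → x = 0)

lemma nadd (x y : C) : n (x + y) = n x + n y + polar n x y := by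
  simp [QuadraticMap.polar]

include hmul in
lemma comp_r (x y z : C) : polar n (x * z) (y * z) = polar n x y * n z := by
  simp only [QuadraticMap.polar, ← add_mul, hmul]; ring

include hmul in
lemma comp_l (x y z : C) : polar n (x * y) (x * z) = n x * polar n y z := by
  simp only [QuadraticMap.polar, ← mul_add, hmul]; ring

include hmul in
lemma polar4 (x y z w : C) :
    polar n (x * z) (y * w) + polar n (x * w) (y * z) = polar n x y * polar n z w := by
  have h := comp_r hmul x y (z + w)
  simp only [mul_add, polar_add_left, polar_add_right, nadd, comp_r hmul x y z,
    comp_r hmul x y w] at h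
  linear_combination h

include hnd in
lemma bext {u v : C} (h : ∀ z : C, polar n u z = polar n v z) : u = v := by
  have := hnd (u - v) (fun z => by rw [polar_sub_left, h z, sub_self])
  exact sub_eq_zero.mp this

include hnd in
lemma one_ne_zero' (hdim : Module.finrank F C = 8) : (1 : C) ≠ 0 := by
  intro h1
  have hsub : ∀ x : C, x = 0 := fun x => by rw [← mul_one x, h1, mul_zero]
  have : Subsingleton C := ⟨fun a b => by rw [hsub a, hsub b]⟩
  rw [Module.finrank_zero_of_subsingleton] at hdim
  exact (by norm_num : (0:ℕ) ≠ 8) hdim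

include hmul hnd in
lemma n_one (hdim : Module.finrank F C = 8) : n 1 = 1 := by
  by_contra h
  have hz : ∀ x : C, n x = 0 := by
    intro x
    have := hmul x 1
    rw [mul_one] at this
    have h2 : n x * (1 - n 1) = 0 := by linear_combination this
    rcases mul_eq_zero.mp h2 with h3 | h3
    · exact h3
    · exact absurd (by linear_combination -h3 : n 1 = 1) h
  have : (1:C) = 0 := hnd 1 (fun y => by
    simp [QuadraticMap.polar, hz])
  exact one_ne_zero' hnd hdim this

include hmul hnd in
lemma polar_one_one (hdim : Module.finrank F C = 8) : polar n 1 1 = (2:F) := by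
  have : (1:C) + 1 = (2:F) • 1 := by rw [two_smul]
  rw [QuadraticMap.polar, this, QuadraticMap.map_smul, n_one hmul hnd hdim, smul_eq_mul]
  ring

variable (hdim : Module.finrank F C = 8)

section withkap

lemma kap_add (x y : C) : kap n (x + y) = kap n x + kap n y := by
  simp [kap, polar_add_left, add_smul]; abel

lemma kap_smul (s : F) (x : C) : kap n (s • x) = s • kap n x := by
  simp [kap, polar_smul_left, smul_smul, smul_sub]

lemma kap_sub (x y : C) : kap n (x - y) = kap n x - kap n y := by
  simp [kap, polar_sub_left, sub_smul]; abel

include hmul hnd hdim in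
lemma kap_one : kap n (1:C) = 1 := by
  rw [kap, polar_one_one hmul hnd hdim, two_smul]; abel

include hmul hnd hdim in
lemma polar_kap_one (x : C) : polar n (kap n x) 1 = polar n x 1 := by
  rw [kap, polar_sub_left, polar_smul_left, polar_one_one hmul hnd hdim, smul_eq_mul]; ring

include hmul hnd hdim in
lemma kap_kap (x : C) : kap n (kap n x) = x := by
  rw [kap, polar_kap_one hmul hnd hdim, kap]; abel

lemma polar_kap_left (x y : C) :
    polar n (kap n x) y = polar n x 1 * polar n 1 y - polar n x y := by
  rw [kap, polar_sub_left, polar_smul_left, smul_eq_mul]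

include hmul in
lemma bmul_left (x y z : C) : polar n (x * y) z = polar n y (kap n x * z) := by
  have h := polar4 hmul x 1 y z
  rw [one_mul, one_mul] at h
  have : kap n x * z = polar n x 1 • z - x * z := by
    rw [kap, sub_mul, smul_mul_assoc, one_mul]
  rw [this, polar_sub_right, polar_smul_right, smul_eq_mul, polar_comm (⇑n) y (x*z)]
  linear_combination h

include hmul in
lemma bmul_right (x y z : C) : polar n (x * y) z = polar n x (z * kap n y) := by
  have h := polar4 hmul x z y 1
  rw [mul_one, mul_one] at h
  have : z * kap n y = polar n y 1 • z - z * y := by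
    rw [kap, mul_sub, mul_smul_comm, mul_one]
  rw [this, polar_sub_right, polar_smul_right, smul_eq_mul, polar_comm (⇑n) x (z*y)]
  linear_combination h + polar_comm (⇑n) (z*y) x

include hmul hnd hdim in
lemma n_kap (x : C) : n (kap n x) = n x := by
  have h1 : kap n x = polar n x 1 • (1:C) + (-x) := by rw [kap]; abel
  have h2 : (-x : C) = (-1:F) • x := by rw [neg_one_smul]
  rw [h1, nadd, QuadraticMap.map_smul, n_one hmul hnd hdim, polar_smul_left, h2,
    QuadraticMap.map_smul, polar_smul_right, polar_comm (⇑n) 1 x, smul_eq_mul,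
    smul_eq_mul, smul_eq_mul]
  simp only [smul_eq_mul]
  ring

include hmul hnd hdim in
lemma kap_mul_self (x : C) : kap n x * x = n x • (1:C) := by
  refine bext hnd (fun z => ?_)
  rw [bmul_left hmul, kap_kap hmul hnd hdim, polar_smul_left, smul_eq_mul]
  calc polar n x (x*z) = polar n (x*1) (x*z) := by rw [mul_one]
  _ = n x * polar n 1 z := comp_l hmul x 1 z

include hmul hnd hdim in
lemma mul_kap_self (x : C) : x * kap n x = n x • (1:C) := by
  refine bext hnd (fun z => ?_)
  rw [bmul_left hmul, polar_smul_left, smul_eq_mul]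
  calc polar n (kap n x) (kap n x * z) = polar n (kap n x * 1) (kap n x * z) := by rw [mul_one]
  _ = n (kap n x) * polar n 1 z := comp_l hmul _ 1 z
  _ = n x * polar n 1 z := by rw [n_kap hmul hnd hdim]

include hmul hnd hdim in
lemma kap_mul_mul (x y : C) : kap n x * (x * y) = n x • y := by
  refine bext hnd (fun z => ?_)
  rw [bmul_left hmul, kap_kap hmul hnd hdim, polar_smul_left, smul_eq_mul]
  exact comp_l hmul x y z

include hmul hnd hdim in
lemma mul_mul_kap (x y : C) : (y * x) * kap n x = n x • y := by
  refine bext hnd (fun z => ?_)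
  rw [bmul_right hmul, kap_kap hmul hnd hdim, polar_smul_left, smul_eq_mul,
    comp_r hmul y z x]
  ring

include hmul hnd hdim in
lemma sq_eq (x : C) : x * x = polar n x 1 • x - n x • (1:C) := by
  have hx : x = polar n x 1 • (1:C) - kap n x := by rw [kap]; abel
  nth_rw 1 [hx]
  rw [sub_mul, smul_mul_assoc, one_mul, kap_mul_self hmul hnd hdim]

include hmul hnd hdim in
lemma sqlin (x y : C) :
    x * y + y * x = polar n x 1 • y + polar n y 1 • x - polar n x y • (1:C) := by
  have h := sq_eq hmul hnd hdim (x + y)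
  simp only [add_mul, mul_add, polar_add_left, nadd, add_smul] at h
  rw [sq_eq hmul hnd hdim x, sq_eq hmul hnd hdim y] at h
  linear_combination (norm := module) h

include hmul hnd hdim in
lemma alt_l (x y : C) : x * (x * y) = (x * x) * y := by
  have hx : x = polar n x 1 • (1:C) - kap n x := by rw [kap]; abel
  nth_rw 1 [hx]
  rw [sub_mul, smul_mul_assoc, one_mul, kap_mul_mul hmul hnd hdim,
    sq_eq hmul hnd hdim, sub_mul, smul_mul_assoc, smul_mul_assoc, one_mul]

include hmul hnd hdim in
lemma alt_r (x y : C) : (y * x) * x = y * (x * x) := by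
  have hx : x = polar n x 1 • (1:C) - kap n x := by rw [kap]; abel
  nth_rw 2 [hx]
  rw [mul_sub, mul_smul_comm, mul_one, mul_mul_kap hmul hnd hdim,
    sq_eq hmul hnd hdim, mul_sub, mul_smul_comm, mul_smul_comm, mul_one]

include hmul hnd hdim in
lemma lin_alt_l (x z y : C) : x * (z * y) + z * (x * y) = (x * z) * y + (z * x) * y := by
  have h := alt_l hmul hnd hdim (x + z) y
  simp only [add_mul, mul_add] at h
  linear_combination (norm := module) h - alt_l hmul hnd hdim x y - alt_l hmul hnd hdim z y

include hmul hnd hdim in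
lemma lin_alt_r (x z y : C) : (y * x) * z + (y * z) * x = y * (x * z) + y * (z * x) := by
  have h := alt_r hmul hnd hdim (x + z) y
  simp only [add_mul, mul_add] at h
  linear_combination (norm := module) h - alt_r hmul hnd hdim x y - alt_r hmul hnd hdim z y

include hmul hnd hdim in
lemma kap_mul (x y : C) : kap n (x * y) = kap n y * kap n x := by
  refine bext hnd (fun z => ?_)
  rw [polar_kap_left, bmul_left hmul (kap n y) (kap n x) z, kap_kap hmul hnd hdim,
    polar_kap_left]
  rw [polar_comm (⇑n) 1 z, polar_comm (⇑n) 1 (y*z), polar_comm (⇑n) x (y*z)]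
  have g1 : polar n (x*y) 1 = polar n y 1 * polar n x 1 - polar n x y := by
    have h := bmul_right hmul x y 1
    rw [one_mul, polar_comm (⇑n) x (kap n y), polar_kap_left, polar_comm (⇑n) 1 x,
      polar_comm (⇑n) y x] at h
    exact h
  have g2 : polar n (y*z) 1 = polar n z 1 * polar n y 1 - polar n y z := by
    have h := bmul_right hmul y z 1
    rw [one_mul, polar_comm (⇑n) y (kap n z), polar_kap_left, polar_comm (⇑n) 1 y,
      polar_comm (⇑n) z y] at h
    exact h
  have c3 := polar4 hmul x 1 y z
  rw [one_mul, one_mul] at c3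
  have c4 := polar4 hmul y x z 1
  rw [mul_one, mul_one, polar_comm (⇑n) y (x*z), polar_comm (⇑n) y x] at c4
  linear_combination polar n z 1 * g1 - c3 - polar n x 1 * g2 + c4

lemma bu_add_left (x x' y : C) : bu n (x + x') y = bu n x y + bu n x' y := by
  simp only [bu, kap_add, add_mul]

lemma bu_add_right (x y y' : C) : bu n x (y + y') = bu n x y + bu n x y' := by
  simp only [bu, kap_add, mul_add]

lemma bu_smul_left (s : F) (x y : C) : bu n (s • x) y = s • bu n x y := by
  simp only [bu, kap_smul, smul_mul_assoc]

lemma bu_smul_right (s : F) (x y : C) : bu n x (s • y) = s • bu n x y := by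
  simp only [bu, kap_smul, mul_smul_comm]

lemma bu_sub_left (x x' y : C) : bu n (x - x') y = bu n x y - bu n x' y := by
  simp only [bu, kap_sub, sub_mul]

lemma bu_sub_right (x y y' : C) : bu n x (y - y') = bu n x y - bu n x y' := by
  simp only [bu, kap_sub, mul_sub]

include hmul hnd hdim in
lemma polar_kap_kap (x y : C) : polar n (kap n x) (kap n y) = polar n x y := by
  rw [polar_kap_left, polar_comm (⇑n) 1 (kap n y), polar_kap_one hmul hnd hdim,
    polar_comm (⇑n) x (kap n y), polar_kap_left]
  linear_combination polar_comm (⇑n) y x - polar n y 1 * polar_comm (⇑n) 1 x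

include hmul hnd hdim in
lemma bu_S1 (x y z : C) : polar n (bu n x y) z = polar n x (bu n y z) := by
  rw [bu, bu, bmul_left hmul, kap_kap hmul hnd hdim, polar_comm (⇑n) x (kap n y * kap n z),
    bmul_right hmul, kap_kap hmul hnd hdim]

include hmul hnd hdim in
lemma bu_S2 (x y : C) : bu n x (bu n y x) = n x • y := by
  rw [bu, bu, kap_mul hmul hnd hdim, kap_kap hmul hnd hdim, kap_kap hmul hnd hdim,
    kap_mul_mul hmul hnd hdim]

include hmul hnd hdim in
lemma bu_S2' (x y : C) : bu n (bu n x y) x = n x • y := by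
  rw [bu, bu, kap_mul hmul hnd hdim, kap_kap hmul hnd hdim, kap_kap hmul hnd hdim,
    mul_mul_kap hmul hnd hdim]

include hmul hnd hdim in
lemma bu_I (x y z : C) : bu n x (bu n y z) + bu n z (bu n y x) = polar n x z • y := by
  have h := bu_S2 hmul hnd hdim (x + z) y
  rw [show bu n y (x + z) = bu n y x + bu n y z from bu_add_right _ _ _] at h
  simp only [bu_add_left, bu_add_right, nadd, add_smul] at h
  linear_combination (norm := module) h - bu_S2 hmul hnd hdim x y - bu_S2 hmul hnd hdim z y

include hmul hnd hdim in
lemma bu_II (x y z : C) : bu n (bu n x y) z + bu n (bu n z y) x = polar n x z • y := by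
  have h := bu_S2' hmul hnd hdim (x + z) y
  rw [show bu n (x + z) y = bu n x y + bu n z y from bu_add_left _ _ _] at h
  simp only [bu_add_left, bu_add_right, nadd, add_smul] at h
  linear_combination (norm := module) h - bu_S2' hmul hnd hdim x y - bu_S2' hmul hnd hdim z y

variable (n) in
/-- conjugation as a linear map -/
def kapL : C →ₗ[F] C := { toFun := kap n, map_add' := kap_add, map_smul' := kap_smul }

@[simp] lemma kapL_apply (x : C) : kapL n x = kap n x := rfl

variable (n) in
/-- para-Hurwitz product as a bilinear map -/
def buL : C →ₗ[F] C →ₗ[F] C := LinearMap.mk₂ F (bu n) bu_add_left bu_smul_left bu_add_right bu_smul_right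

@[simp] lemma buL_apply (x y : C) : buL n x y = bu n x y := rfl

variable (n) in
/-- generator of the orthogonal Lie algebra -/
noncomputable def sigmaL (p q : C) : C →ₗ[F] C :=
  ((polarBilin n p).smulRight q) - ((polarBilin n q).smulRight p)

lemma sigmaL_apply (p q x : C) :
    sigmaL n p q x = polar n p x • q - polar n q x • p := by
  simp [sigmaL, QuadraticMap.polarBilin]

variable (n) in
/-- first triality companion of `sigmaL` -/
def t1L (p q : C) : C →ₗ[F] C :=
  ((buL n).flip q).comp ((buL n) p) - ((buL n).flip p).comp ((buL n) q)

lemma t1L_apply (p q x : C) :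
    t1L n p q x = bu n (bu n p x) q - bu n (bu n q x) p := rfl

variable (n) in
/-- second triality companion of `sigmaL` -/
def t2L (p q : C) : C →ₗ[F] C :=
  ((buL n) q).comp ((buL n).flip p) - ((buL n) p).comp ((buL n).flip q)

lemma t2L_apply (p q y : C) :
    t2L n p q y = bu n q (bu n y p) - bu n p (bu n y q) := rfl

variable (n) in
/-- skew endomorphisms -/
def IsSkew (d : C →ₗ[F] C) : Prop := ∀ u v : C, polar n (d u) v + polar n u (d v) = 0

lemma sigma_skew (p q : C) : IsSkew n (sigmaL n p q) := by
  intro u v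
  rw [sigmaL_apply, sigmaL_apply, polar_sub_left, polar_smul_left, polar_smul_left,
    polar_sub_right, polar_smul_right, polar_smul_right]
  simp only [smul_eq_mul]
  linear_combination polar n p v * polar_comm (⇑n) u q - polar n q v * polar_comm (⇑n) u p

include hmul hnd hdim in
lemma t1_skew (p q : C) : IsSkew n (t1L n p q) := by
  have e1 : ∀ a b : C, polar n (bu n (bu n p a) q) b = polar n p (bu n a (bu n q b)) :=
    fun a b => by rw [bu_S1 hmul hnd hdim, bu_S1 hmul hnd hdim]
  have e2 : ∀ a b : C, polar n (bu n (bu n q a) p) b = polar n q (bu n a (bu n p b)) :=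
    fun a b => by rw [bu_S1 hmul hnd hdim, bu_S1 hmul hnd hdim]
  have f1 : ∀ a b : C, polar n p (bu n a (bu n q b)) + polar n p (bu n b (bu n q a))
      = polar n a b * polar n p q := fun a b => by
    rw [← polar_add_right, bu_I hmul hnd hdim a q b, polar_smul_right, smul_eq_mul]
  have f2 : ∀ a b : C, polar n q (bu n a (bu n p b)) + polar n q (bu n b (bu n p a))
      = polar n a b * polar n q p := fun a b => by
    rw [← polar_add_right, bu_I hmul hnd hdim a p b, polar_smul_right, smul_eq_mul]
  intro u v
  rw [t1L_apply, t1L_apply, polar_sub_left, polar_sub_right, e1 u v, e2 u v,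
    polar_comm (⇑n) u (bu n (bu n p v) q), polar_comm (⇑n) u (bu n (bu n q v) p),
    e1 v u, e2 v u]
  linear_combination f1 u v - f2 u v + polar n u v * polar_comm (⇑n) p q

include hmul hnd hdim in
lemma t2_skew (p q : C) : IsSkew n (t2L n p q) := by
  have e1 : ∀ a b : C, polar n (bu n q (bu n a p)) b = polar n q (bu n (bu n a p) b) :=
    fun a b => by rw [bu_S1 hmul hnd hdim]
  have e2 : ∀ a b : C, polar n (bu n p (bu n a q)) b = polar n p (bu n (bu n a q) b) :=
    fun a b => by rw [bu_S1 hmul hnd hdim]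
  have f1 : ∀ a b : C, polar n q (bu n (bu n a p) b) + polar n q (bu n (bu n b p) a)
      = polar n a b * polar n q p := fun a b => by
    rw [← polar_add_right, bu_II hmul hnd hdim a p b, polar_smul_right, smul_eq_mul]
  have f2 : ∀ a b : C, polar n p (bu n (bu n a q) b) + polar n p (bu n (bu n b q) a)
      = polar n a b * polar n p q := fun a b => by
    rw [← polar_add_right, bu_II hmul hnd hdim a q b, polar_smul_right, smul_eq_mul]
  intro u v
  rw [t2L_apply, t2L_apply, polar_sub_left, polar_sub_right, e1 u v, e2 u v,
    polar_comm (⇑n) u (bu n q (bu n v p)), polar_comm (⇑n) u (bu n p (bu n v q)),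
    e1 v u, e2 v u]
  linear_combination f1 u v - f2 u v - polar n u v * polar_comm (⇑n) p q

include hmul hnd hdim in
lemma main_identity (p q x y : C) :
    (2:F) • sigmaL n p q (bu n x y) = bu n (t1L n p q x) y + bu n x (t2L n p q y) := by
  have h1 := bu_I hmul hnd hdim x q (bu n y p)
  rw [show polar n x (bu n y p) = polar n p (bu n x y) by
    rw [← bu_S1 hmul hnd hdim, polar_comm (⇑n) (bu n x y) p]] at h1
  have h2 := bu_II hmul hnd hdim (bu n q x) p y
  rw [show polar n (bu n q x) y = polar n q (bu n x y) from bu_S1 hmul hnd hdim q x y] at h2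
  have h3 := bu_I hmul hnd hdim x p (bu n y q)
  rw [show polar n x (bu n y q) = polar n q (bu n x y) by
    rw [← bu_S1 hmul hnd hdim, polar_comm (⇑n) (bu n x y) q]] at h3
  have h4 := bu_II hmul hnd hdim (bu n p x) q y
  rw [show polar n (bu n p x) y = polar n p (bu n x y) from bu_S1 hmul hnd hdim p x y] at h4
  rw [sigmaL_apply, t1L_apply, t2L_apply, bu_sub_left, bu_sub_right]
  linear_combination (norm := module) h2 + h3 - h1 - h4

lemma polar_sum_left' {ι : Type*} (t : Finset ι) (f : ι → C) (z : C) :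
    polar n (∑ i ∈ t, f i) z = ∑ i ∈ t, polar n (f i) z :=
  map_sum ((polarBilin n).flip z) f t

variable (n) in
/-- the triality relation -/
def Rel (d0 d1 d2 : C →ₗ[F] C) : Prop :=
  ∀ x y : C, d0 (bu n x y) = bu n (d1 x) y + bu n x (d2 y)

lemma bu_zero_left (y : C) : bu n 0 y = 0 := by
  have := bu_smul_left (n := n) (0:F) 0 y; simpa using this

lemma bu_zero_right (x : C) : bu n x 0 = 0 := by
  have := bu_smul_right (n := n) (0:F) x 0; simpa using this

lemma rel_zero : Rel n 0 0 0 := by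
  intro x y; simp [bu_zero_left, bu_zero_right]

lemma rel_add {a0 a1 a2 b0 b1 b2 : C →ₗ[F] C} (ha : Rel n a0 a1 a2) (hb : Rel n b0 b1 b2) :
    Rel n (a0 + b0) (a1 + b1) (a2 + b2) := by
  intro x y
  simp only [LinearMap.add_apply, ha x y, hb x y, bu_add_left, bu_add_right]
  abel

lemma rel_smul {a0 a1 a2 : C →ₗ[F] C} (s : F) (ha : Rel n a0 a1 a2) :
    Rel n (s • a0) (s • a1) (s • a2) := by
  intro x y
  simp only [LinearMap.smul_apply, ha x y, bu_smul_left, bu_smul_right, smul_add]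

lemma rel_sum {ι : Type*} (t : Finset ι) (f g h : ι → (C →ₗ[F] C))
    (hfg : ∀ i ∈ t, Rel n (f i) (g i) (h i)) :
    Rel n (∑ i ∈ t, f i) (∑ i ∈ t, g i) (∑ i ∈ t, h i) := by
  classical
  induction t using Finset.induction_on with
  | empty => simpa using rel_zero
  | insert _ _ hnotmem ih =>
    rename_i a t'
    simp only [Finset.sum_insert hnotmem]
    exact rel_add (hfg a (Finset.mem_insert_self a t'))
      (ih (fun i hi => hfg i (Finset.mem_insert_of_mem hi)))

lemma skew_zero : IsSkew n (0 : C →ₗ[F] C) := by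
  intro u v; simp

lemma skew_add {a b : C →ₗ[F] C} (ha : IsSkew n a) (hb : IsSkew n b) : IsSkew n (a + b) := by
  intro u v
  have h1 := ha u v; have h2 := hb u v
  simp only [LinearMap.add_apply, polar_add_left, polar_add_right]
  linear_combination h1 + h2

lemma skew_smul {a : C →ₗ[F] C} (s : F) (ha : IsSkew n a) : IsSkew n (s • a) := by
  intro u v
  have h := ha u v
  simp only [LinearMap.smul_apply, polar_smul_left, polar_smul_right, smul_eq_mul]
  linear_combination s * h

lemma skew_sum {ι : Type*} (t : Finset ι) (f : ι → (C →ₗ[F] C))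
    (hf : ∀ i ∈ t, IsSkew n (f i)) : IsSkew n (∑ i ∈ t, f i) := by
  classical
  induction t using Finset.induction_on with
  | empty => simpa using skew_zero
  | insert _ _ hnotmem ih =>
    rename_i a t'
    simp only [Finset.sum_insert hnotmem]
    exact skew_add (hf a (Finset.mem_insert_self a t'))
      (ih (fun i hi => hf i (Finset.mem_insert_of_mem hi)))

section span
variable [FiniteDimensional F C]

include hnd in
lemma bext_basis {ι : Type*} (v : Basis ι F C) {u w : C}
    (h : ∀ l, polar n u (v l) = polar n w (v l)) : u = w := by
  refine bext hnd (fun z => ?_)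
  have heq : polarBilin n u = polarBilin n w := v.ext (fun l => h l)
  exact DFunLike.congr_fun heq z

include hnd in
lemma basis_diag_ne_zero {ι : Type*} (v : Basis ι F C)
    (hv : (polarBilin n).IsOrthoᵢ v) (i : ι) : polar n (v i) (v i) ≠ 0 := by
  intro hci
  have h0 : polarBilin n (v i) = 0 := by
    refine v.ext (fun l => ?_)
    by_cases hl : i = l
    · subst hl; simpa using hci
    · simpa using LinearMap.isOrthoᵢ_def.mp hv i l hl
  have : v i = 0 := hnd _ (fun z => DFunLike.congr_fun h0 z)
  exact v.ne_zero i this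

include hmul hnd in
lemma span_sigma (h2 : (2:F) ≠ 0) (d0 : C →ₗ[F] C) (hd0 : IsSkew n d0)
    {ι : Type*} [Fintype ι] [DecidableEq ι] (v : Basis ι F C)
    (hv : (polarBilin n).IsOrthoᵢ v) :
    d0 = ∑ i, ∑ j, (polar n (d0 (v i)) (v j) /
      (2 * polar n (v i) (v i) * polar n (v j) (v j))) • sigmaL n (v i) (v j) := by
  have hc : ∀ i, polar n (v i) (v i) ≠ 0 := basis_diag_ne_zero hnd v hv
  have horth : ∀ i j : ι, i ≠ j → polar n (v i) (v j) = 0 :=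
    fun i j hij => LinearMap.isOrthoᵢ_def.mp hv i j hij
  set μ : ι → ι → F := fun i j => polar n (d0 (v i)) (v j) /
      (2 * polar n (v i) (v i) * polar n (v j) (v j)) with hμ
  refine v.ext (fun k => bext_basis hnd v (fun l => ?_))
  rw [LinearMap.sum_apply, polar_sum_left']
  have hterm : ∀ i, polar n ((∑ j, μ i j • sigmaL n (v i) (v j)) (v k)) (v l)
      = (∑ j, μ i j * (polar n (v i) (v k) * polar n (v j) (v l)))
        - (∑ j, μ i j * (polar n (v j) (v k) * polar n (v i) (v l))) := by
    intro i
    rw [LinearMap.sum_apply, polar_sum_left', ← Finset.sum_sub_distrib]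
    refine Finset.sum_congr rfl (fun j _ => ?_)
    rw [LinearMap.smul_apply, polar_smul_left, sigmaL_apply, polar_sub_left,
      polar_smul_left, polar_smul_left]
    simp only [smul_eq_mul]
    ring
  refine Eq.trans ?_ (Finset.sum_congr rfl (fun i _ => hterm i)).symm
  rw [Finset.sum_sub_distrib]
  have hA : (∑ i, ∑ j, μ i j * (polar n (v i) (v k) * polar n (v j) (v l)))
      = μ k l * (polar n (v k) (v k) * polar n (v l) (v l)) := by
    rw [Finset.sum_eq_single k (fun i _ hik => Finset.sum_eq_zero (fun j _ => by
        rw [horth i k hik]; ring))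
      (fun h => absurd (Finset.mem_univ k) h)]
    exact Finset.sum_eq_single l (fun j _ hjl => by rw [horth j l hjl]; ring)
      (fun h => absurd (Finset.mem_univ l) h)
  have hB : (∑ i, ∑ j, μ i j * (polar n (v j) (v k) * polar n (v i) (v l)))
      = μ l k * (polar n (v k) (v k) * polar n (v l) (v l)) := by
    rw [Finset.sum_eq_single l (fun i _ hil => Finset.sum_eq_zero (fun j _ => by
        rw [horth i l hil]; ring))
      (fun h => absurd (Finset.mem_univ l) h)]
    rw [Finset.sum_eq_single k (fun j _ hjk => by rw [horth j k hjk]; ring)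
      (fun h => absurd (Finset.mem_univ k) h)]
  rw [hA, hB]
  have hskew : polar n (d0 (v l)) (v k) = - polar n (d0 (v k)) (v l) := by
    have h := hd0 (v l) (v k)
    rw [polar_comm (⇑n) (v l) (d0 (v k))] at h
    linear_combination h
  simp only [hμ]
  rw [hskew]
  have hck0 : polar n (v k) (v k) ≠ 0 := hc k
  have hcl0 : polar n (v l) (v l) ≠ 0 := hc l
  generalize hDd : polar n (d0 (v k)) (v l) = D at *
  generalize hckg : polar n (v k) (v k) = ck at *
  generalize hclg : polar n (v l) (v l) = cl at *
  field_simp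
  ring

include hmul hnd hdim in
lemma exists_triple (h2 : (2:F) ≠ 0) (d0 : C →ₗ[F] C) (hd0 : IsSkew n d0) :
    ∃ d1 d2 : C →ₗ[F] C, IsSkew n d1 ∧ IsSkew n d2 ∧ Rel n d0 d1 d2 := by
  classical
  haveI : Invertible (2:F) := invertibleOfNonzero h2
  have hsymm : (polarBilin n).IsSymm := ⟨fun x y => by
    simp only [RingHom.id_apply, polarBilin_apply_apply]
    exact polar_comm (⇑n) x y⟩
  obtain ⟨v, hv⟩ := LinearMap.BilinForm.exists_orthogonal_basis hsymm
  refine ⟨∑ i, ∑ j, (polar n (d0 (v i)) (v j) /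
      (2 * polar n (v i) (v i) * polar n (v j) (v j))) • ((2⁻¹ : F) • t1L n (v i) (v j)),
    ∑ i, ∑ j, (polar n (d0 (v i)) (v j) /
      (2 * polar n (v i) (v i) * polar n (v j) (v j))) • ((2⁻¹ : F) • t2L n (v i) (v j)),
    ?_, ?_, ?_⟩
  · exact skew_sum _ _ (fun i _ => skew_sum _ _ (fun j _ =>
      skew_smul _ (skew_smul _ (t1_skew hmul hnd hdim _ _))))
  · exact skew_sum _ _ (fun i _ => skew_sum _ _ (fun j _ =>
      skew_smul _ (skew_smul _ (t2_skew hmul hnd hdim _ _))))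
  · have hrel : ∀ p q : C, Rel n (sigmaL n p q) ((2⁻¹:F) • t1L n p q) ((2⁻¹:F) • t2L n p q) := by
      intro p q x y
      have h := main_identity hmul hnd hdim p q x y
      simp only [LinearMap.smul_apply, bu_smul_left, bu_smul_right]
      calc sigmaL n p q (bu n x y) = (2⁻¹ : F) • ((2:F) • sigmaL n p q (bu n x y)) := by
            rw [smul_smul, inv_mul_cancel₀ h2, one_smul]
        _ = (2⁻¹:F) • bu n (t1L n p q x) y + (2⁻¹:F) • bu n x (t2L n p q y) := by
            rw [h, smul_add]
    have hspan := span_sigma hmul hnd h2 d0 hd0 v hv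
    have hrelsum : Rel n (∑ i, ∑ j, (polar n (d0 (v i)) (v j) /
        (2 * polar n (v i) (v i) * polar n (v j) (v j))) • sigmaL n (v i) (v j))
        (∑ i, ∑ j, (polar n (d0 (v i)) (v j) /
          (2 * polar n (v i) (v i) * polar n (v j) (v j))) • ((2⁻¹:F) • t1L n (v i) (v j)))
        (∑ i, ∑ j, (polar n (d0 (v i)) (v j) /
          (2 * polar n (v i) (v i) * polar n (v j) (v j))) • ((2⁻¹:F) • t2L n (v i) (v j))) :=
      rel_sum _ _ _ _ (fun i _ => rel_sum _ _ _ _ (fun j _ => rel_smul _ (hrel _ _)))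
    rw [← hspan] at hrelsum
    exact hrelsum

include hmul hnd hdim in
lemma nucleus (h2 : (2:F) ≠ 0) (a : C) (ha1 : polar n a 1 = 0)
    (hnuc : ∀ x y : C, x * (a * y) = (x * a) * y) : a = 0 := by
  classical
  by_contra ha
  set B : LinearMap.BilinForm F C := polarBilin n with hBdef
  have hBapp : ∀ u w : C, B u w = polar n u w := fun u w => polarBilin_apply_apply n u w
  have hBnd : B.Nondegenerate := ⟨fun m hm => hnd m (fun y => by rw [← hBapp m y]; exact hm y),
    fun m hm => hnd m (fun y => by rw [polar_comm, ← hBapp y m]; exact hm y)⟩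
  have hrefl : B.IsRefl := fun u w h => by
    rw [hBapp] at h ⊢; rw [polar_comm]; exact h
  -- a is fully nuclear
  have hL : ∀ x y : C, a * (x * y) = (a * x) * y := by
    intro x y
    have h := lin_alt_l hmul hnd hdim x a y
    have h2' := hnuc x y
    linear_combination (norm := module) h - h2'
  have hR : ∀ x y : C, (x * y) * a = x * (y * a) := by
    intro x y
    have h := lin_alt_r hmul hnd hdim y a x
    have h2' := hnuc x y
    linear_combination (norm := module) h + h2'
  -- the subspaces
  set K2 : Submodule F C := Submodule.span F {(1:C), a} with hK2
  have h1K : (1:C) ∈ K2 := Submodule.subset_span (by simp)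
  have haK : a ∈ K2 := Submodule.subset_span (by simp)
  have hK2rank : finrank F K2 ≤ 2 := by
    have hcard : ({(1:C), a} : Set C).toFinset.card ≤ 2 := by
      rw [Set.toFinset_insert, Set.toFinset_singleton]
      exact (Finset.card_insert_le _ _).trans (by simp)
    exact (finrank_span_le_card _).trans hcard
  set W := B.orthogonal K2 with hW
  have hWrank : 6 ≤ finrank F W := by
    have h := LinearMap.BilinForm.finrank_orthogonal hBnd K2
    rw [← hW] at h
    omega
  have hmemW1 : ∀ w ∈ W, polar n (1:C) w = 0 := fun w hw => by
    rw [← hBapp]; exact hw 1 h1K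
  have hmemWa : ∀ w ∈ W, polar n a w = 0 := fun w hw => by
    rw [← hBapp]; exact hw a haK
  -- an anisotropic vector in W
  obtain ⟨x, hxW, hnx⟩ : ∃ x ∈ W, n x ≠ 0 := by
    by_contra hno
    push_neg at hno
    have hWW : W ≤ B.orthogonal W := by
      intro u hu w hw
      show B w u = 0
      rw [hBapp, QuadraticMap.polar, hno w hw, hno u hu, hno (w+u) (W.add_mem hw hu)]
      ring
    have h4 : finrank F W ≤ finrank F (B.orthogonal W) := Submodule.finrank_mono hWW
    rw [LinearMap.BilinForm.finrank_orthogonal hBnd W] at h4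
    omega
  -- anticommutation with a on W
  have hanti : ∀ w ∈ W, a * w = - (w * a) := by
    intro w hw
    have h := sqlin hmul hnd hdim a w
    rw [ha1, show polar n w 1 = 0 by rw [polar_comm]; exact hmemW1 w hw,
      show polar n a w = 0 from hmemWa w hw] at h
    simp only [zero_smul, add_zero, zero_add, sub_zero] at h
    exact eq_neg_of_add_eq_zero_left h
  -- products commute with a
  have hcomm : ∀ y ∈ W, a * (x * y) = (x * y) * a := by
    intro y hy
    calc a * (x * y) = (a * x) * y := hL x y
    _ = (-(x * a)) * y := by rw [← hanti x hxW]
    _ = -((x * a) * y) := by rw [neg_mul]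
    _ = -(x * (a * y)) := by rw [← hnuc x y]
    _ = x * (-(a * y)) := by rw [mul_neg]
    _ = x * (y * a) := by rw [hanti y hy, neg_neg]
    _ = (x * y) * a := (hR x y).symm
  -- c • y lands in K2
  have hKmem : ∀ y ∈ W, (a * x) * y ∈ K2 := by
    intro y hy
    have h := sqlin hmul hnd hdim a (x * y)
    rw [ha1, zero_smul, zero_add] at h
    have h2az : (2:F) • ((a * x) * y)
        = polar n (x*y) 1 • a - polar n a (x*y) • (1:C) := by
      have hcy : (a * x) * y = a * (x * y) := (hL x y).symm
      rw [hcy, two_smul]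
      nth_rw 2 [hcomm y hy]
      linear_combination (norm := module) h
    have : (a * x) * y = (2⁻¹:F) • ((2:F) • ((a * x) * y)) := by
      rw [smul_smul, inv_mul_cancel₀ h2, one_smul]
    rw [this, h2az]
    exact K2.smul_mem _ (K2.sub_mem (K2.smul_mem _ haK) (K2.smul_mem _ h1K))
  -- the linear map W → C, y ↦ (a*x)*y
  set φ : W →ₗ[F] C := (LinearMap.mulLeft F (a*x)).comp W.subtype with hφ
  have hφapp : ∀ u : W, φ u = (a*x) * (u : C) := fun u => rfl
  have hφrange : LinearMap.range φ ≤ K2 := by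
    rintro _ ⟨u, rfl⟩
    exact hKmem (u : C) u.2
  have hφker : 4 ≤ finrank F (LinearMap.ker φ) := by
    have hrn := LinearMap.finrank_range_add_finrank_ker φ
    have hle : finrank F (LinearMap.range φ) ≤ 2 :=
      le_trans (Submodule.finrank_mono hφrange) hK2rank
    omega
  by_cases hna : n a = 0
  · -- isotropic case
    by_cases hc0 : a * x = 0
    · -- a*x = 0 forces a = 0
      refine ha (hnd a (fun w => ?_))
      have h := comp_r hmul a w x
      rw [hc0, polar_zero_left] at h
      rcases mul_eq_zero.mp h.symm with h' | h'
      · exact h'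
      · exact absurd h' hnx
    · -- a*x ≠ 0
      set M : Submodule F C := Submodule.map W.subtype (LinearMap.ker φ) with hM
      have hMrank : 4 ≤ finrank F M := by
        rw [hM, Submodule.finrank_map_subtype_eq]
        exact hφker
      have hMW : ∀ z ∈ M, z ∈ W := by
        rintro _ ⟨u, hu, rfl⟩
        exact u.2
      have hMc : ∀ z ∈ M, (a*x) * z = 0 := by
        rintro _ ⟨u, hu, rfl⟩
        exact LinearMap.mem_ker.mp hu
      have hinj : Function.Injective (LinearMap.mulLeft F x) := by
        intro u v huv
        have h := congrArg (fun w => kap n x * w) huv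
        simp only [LinearMap.mulLeft_apply] at h
        rw [kap_mul_mul hmul hnd hdim, kap_mul_mul hmul hnd hdim] at h
        calc u = (n x)⁻¹ • (n x • u) := by rw [inv_smul_smul₀ hnx]
        _ = (n x)⁻¹ • (n x • v) := by rw [h]
        _ = v := by rw [inv_smul_smul₀ hnx]
      set S : Submodule F C := Submodule.map (LinearMap.mulLeft F x) M with hS
      have hSrank : 4 ≤ finrank F S := by
        have he := (Submodule.equivMapOfInjective _ hinj M).finrank_eq
        rw [hS, ← he]
        exact hMrank
      have hSiso : ∀ z ∈ S, n z = 0 := by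
        rintro _ ⟨z, hzM, rfl⟩
        simp only [LinearMap.mulLeft_apply]
        have haz : a * (x * z) = 0 := by rw [hL, hMc z hzM]
        obtain ⟨w, hw⟩ : ∃ w, polar n a w ≠ 0 := by
          by_contra hno; push_neg at hno; exact ha (hnd a hno)
        have h := comp_r hmul a w (x*z)
        rw [haz, polar_zero_left] at h
        rcases mul_eq_zero.mp h.symm with h' | h'
        · exact absurd h' hw
        · exact h'
      have hSperp : ∀ z ∈ S, polar n x z = 0 := by
        rintro _ ⟨z, hzM, rfl⟩
        simp only [LinearMap.mulLeft_apply]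
        have h1z : polar n (1:C) z = 0 := hmemW1 z (hMW z hzM)
        calc polar n x (x*z) = polar n (x*1) (x*z) := by rw [mul_one]
        _ = n x * polar n 1 z := comp_l hmul x 1 z
        _ = 0 := by rw [h1z, mul_zero]
      set S' := S ⊔ Submodule.span F {x} with hS'
      have hxS' : x ∈ S' := by
        rw [hS']
        exact Submodule.mem_sup_right (Submodule.mem_span_singleton_self x)
      have hxS : x ∉ S := fun h => hnx (hSiso x h)
      have hlt : S < S' := lt_of_le_of_ne le_sup_left (fun heq => hxS (heq ▸ hxS'))
      have hS'rank : finrank F S + 1 ≤ finrank F S' :=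
        Submodule.finrank_lt_finrank_of_lt hlt
      have hSperp' : S ≤ B.orthogonal S' := by
        intro s hs u hu
        obtain ⟨s', hs', w, hw, rfl⟩ := Submodule.mem_sup.mp hu
        obtain ⟨t, rfl⟩ := Submodule.mem_span_singleton.mp hw
        show B (s' + t • x) s = 0
        rw [map_add, LinearMap.add_apply, LinearMap.map_smul, LinearMap.smul_apply,
          hBapp, hBapp]
        have h1 : polar n s' s = 0 := by
          rw [QuadraticMap.polar, hSiso s' hs', hSiso s hs, hSiso (s' + s) (S.add_mem hs' hs)]
          ring
        have h2 : polar n x s = 0 := hSperp s hs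
        rw [h1, h2, smul_eq_mul, mul_zero, add_zero]
      have hcontra := Submodule.finrank_mono hSperp'
      rw [LinearMap.BilinForm.finrank_orthogonal hBnd S'] at hcontra
      have hfinS' : finrank F S' ≤ 8 := hdim ▸ Submodule.finrank_le S'
      omega
  · -- anisotropic case : ker φ has a nonzero vector, contradiction
    haveI hnker : Nontrivial (LinearMap.ker φ) := by
      apply Module.nontrivial_of_finrank_pos (R := F)
      omega
    obtain ⟨u, hu⟩ := exists_ne (0 : LinearMap.ker φ)
    have hcy0 : (a*x) * ((u : W) : C) = 0 := LinearMap.mem_ker.mp u.2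
    have hz : n (a*x) • (((u : W) : C)) = 0 := by
      rw [← kap_mul_mul hmul hnd hdim (a*x) (((u : W) : C)), hcy0, mul_zero]
    have hnax : n (a*x) ≠ 0 := by
      rw [hmul]; exact mul_ne_zero hna hnx
    have : (((u : W) : C)) = 0 := by
      calc (((u : W) : C)) = (n (a*x))⁻¹ • (n (a*x) • (((u : W) : C))) := by
            rw [inv_smul_smul₀ hnax]
      _ = 0 := by rw [hz, smul_zero]
    apply hu
    have : (u : W) = 0 := Subtype.ext this
    exact Subtype.ext this

include hmul hnd hdim in
lemma kap_zero : kap n (0:C) = 0 := by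
  rw [kap, polar_zero_left, zero_smul, sub_zero]

include hmul hnd hdim in
lemma unique_aux (h2 : (2:F) ≠ 0) (d1 d2 : C →ₗ[F] C) (hs1 : IsSkew n d1) (hs2 : IsSkew n d2)
    (hrel : ∀ x y : C, bu n (d1 x) y + bu n x (d2 y) = 0) : d1 = 0 ∧ d2 = 0 := by
  have hstar : ∀ x y : C, kap n (d1 (kap n x)) * y + x * kap n (d2 (kap n y)) = 0 := by
    intro x y
    have h := hrel (kap n x) (kap n y)
    rw [bu, bu, kap_kap hmul hnd hdim, kap_kap hmul hnd hdim] at h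
    exact h
  set aa := kap n (d2 1) with haa
  have he1 : ∀ x : C, kap n (d1 (kap n x)) = -(x * aa) := by
    intro x
    have h := hstar x 1
    rw [kap_one hmul hnd hdim, mul_one] at h
    exact eq_neg_of_add_eq_zero_left h
  have he2 : ∀ y : C, kap n (d2 (kap n y)) = aa * y := by
    intro y
    have h := hstar 1 y
    rw [kap_one hmul hnd hdim, one_mul] at h
    have h1 := he1 1
    rw [kap_one hmul hnd hdim, one_mul] at h1
    rw [h1, neg_mul] at h
    linear_combination (norm := module) h
  have hs2' : ∀ y z : C, polar n (aa * y) z + polar n y (aa * z) = 0 := by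
    intro y z
    have h := hs2 (kap n y) (kap n z)
    have t1 : polar n (aa*y) z = polar n (d2 (kap n y)) (kap n z) := by
      calc polar n (aa*y) z
          = polar n (kap n (d2 (kap n y))) (kap n (kap n z)) := by
            rw [he2, kap_kap hmul hnd hdim]
      _ = polar n (d2 (kap n y)) (kap n z) := polar_kap_kap hmul hnd hdim _ _
    have t2 : polar n y (aa*z) = polar n (kap n y) (d2 (kap n z)) := by
      calc polar n y (aa*z)
          = polar n (kap n (kap n y)) (kap n (d2 (kap n z))) := by
            rw [he2, kap_kap hmul hnd hdim]
      _ = polar n (kap n y) (d2 (kap n z)) := polar_kap_kap hmul hnd hdim _ _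
    rw [t1, t2]
    exact h
  have haa1 : polar n aa 1 = 0 := by
    have h := hs2' 1 1
    rw [mul_one, polar_comm (⇑n) 1 aa] at h
    have h' : (2:F) * polar n aa 1 = 0 := by linear_combination h
    exact (mul_eq_zero.mp h').resolve_left h2
  have hnuc : ∀ x y : C, x * (aa * y) = (x * aa) * y := by
    intro x y
    have h := hstar x y
    rw [he1 x, he2 y, neg_mul] at h
    linear_combination (norm := module) h
  have haa0 : aa = 0 := nucleus hmul hnd hdim h2 aa haa1 hnuc
  constructor
  · apply LinearMap.ext; intro z
    have h := he1 (kap n z)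
    rw [kap_kap hmul hnd hdim, haa0, mul_zero, neg_zero] at h
    have h' : d1 z = kap n (kap n (d1 z)) := (kap_kap hmul hnd hdim _).symm
    rw [LinearMap.zero_apply, h', h, kap_zero hmul hnd hdim]
  · apply LinearMap.ext; intro z
    have h := he2 (kap n z)
    rw [kap_kap hmul hnd hdim, haa0, zero_mul] at h
    have h' : d2 z = kap n (kap n (d2 z)) := (kap_kap hmul hnd hdim _).symm
    rw [LinearMap.zero_apply, h', h, kap_zero hmul hnd hdim]

end span

end withkap

end basic
end ST16

/-- For a Cayley algebra `(C, n)` (8-dimensional unital composition algebra)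
over a field of characteristic ≠ 2, with para-Hurwitz product `bul x y = x̄ * ȳ`, the
projection `π₀ : tri(C,•,n) → so(C,n)` on the first component is an isomorphism of Lie
algebras: for every skew `d₀` there exist unique skew `d₁, d₂` with
`d₀ (x • y) = d₁ x • y + x • d₂ y` for all `x, y`. -/
theorem pi0_triality_bijective {F : Type*} [Field F] (h2 : (2 : F) ≠ 0)
    {C : Type*} [NonAssocRing C] [Module F C] [SMulCommClass F C C] [IsScalarTower F C C]
    [FiniteDimensional F C] (hdim : Module.finrank F C = 8)
    (n : QuadraticForm F C)
    (hmul : ∀ x y : C, n (x * y) = n x * n y)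
    (hnd : ∀ x : C, (∀ y : C, QuadraticMap.polar n x y = 0) → x = 0)
    (bul : C → C → C)
    (hbul : ∀ x y : C, bul x y =
      (QuadraticMap.polar n x 1 • (1 : C) - x) * (QuadraticMap.polar n y 1 • (1 : C) - y)) :
    ∀ d0 : C →ₗ[F] C,
      (∀ u v : C, QuadraticMap.polar n (d0 u) v + QuadraticMap.polar n u (d0 v) = 0) →
      ∃! d : (C →ₗ[F] C) × (C →ₗ[F] C),
        (∀ u v : C, QuadraticMap.polar n (d.1 u) v + QuadraticMap.polar n u (d.1 v) = 0) ∧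
        (∀ u v : C, QuadraticMap.polar n (d.2 u) v + QuadraticMap.polar n u (d.2 v) = 0) ∧
        (∀ x y : C, d0 (bul x y) = bul (d.1 x) y + bul x (d.2 y)) := by
  intro d0 hd0
  have hbul' : ∀ x y : C, bul x y = ST16.bu n x y := fun x y => by
    rw [hbul]; rfl
  obtain ⟨d1, d2, hsk1, hsk2, hrel⟩ :=
    ST16.exists_triple hmul hnd hdim h2 d0 (fun u v => hd0 u v)
  refine ⟨(d1, d2), ⟨hsk1, hsk2, fun x y => ?_⟩, ?_⟩
  · rw [hbul', hbul', hbul']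
    exact hrel x y
  · rintro ⟨e1, e2⟩ ⟨hs1, hs2, hrel'⟩
    dsimp only at hs1 hs2 hrel' ⊢
    have hdiff : ∀ x y : C, ST16.bu n ((e1 - d1) x) y + ST16.bu n x ((e2 - d2) y) = 0 := by
      intro x y
      have ha := hrel' x y
      have hb := hrel x y
      rw [hbul', hbul', hbul'] at ha
      simp only [LinearMap.sub_apply, ST16.bu_sub_left, ST16.bu_sub_right]
      linear_combination (norm := module) hb - ha
    have hskewdiff1 : ST16.IsSkew n (e1 - d1) := by
      have h := ST16.skew_add (n := n) hs1 (ST16.skew_smul (n := n) (-1 : F) hsk1)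
      rwa [neg_one_smul, ← sub_eq_add_neg] at h
    have hskewdiff2 : ST16.IsSkew n (e2 - d2) := by
      have h := ST16.skew_add (n := n) hs2 (ST16.skew_smul (n := n) (-1 : F) hsk2)
      rwa [neg_one_smul, ← sub_eq_add_neg] at h
    obtain ⟨hz1, hz2⟩ :=
      ST16.unique_aux hmul hnd hdim h2 _ _ hskewdiff1 hskewdiff2 hdiff
    exact Prod.ext (sub_eq_zero.mp hz1) (sub_eq_zero.mp hz2)
end

section
/- Let F be a field of characteristic 3, let A be a composition algebra over F (an F-algebra with a nonsingular multiplicative quadratic form n, polar form b), and let σ be an algebra automorphism of A with σ³ = id and n(σ(x)) = n(x) for all x; write δ = σ − id. Fix a splitting A = A₀ ⊕ A₁ ⊕ δ(A₁) ⊕ A₂ (as defined in the context). Then the bilinear form nˢ on A₀ ⊕ A₁ defined by nˢ(x,y) = b(x,y) for x,y ∈ A₀, nˢ(x,y) = b(x, δ(y)) for x,y ∈ A₁, and nˢ(A₀,A₁) = nˢ(A₁,A₀) = 0, is supersymmetric: it is symmetric on A₀ × A₀, it vanishes between A₀ and A₁, and nˢ(x,y) = −nˢ(y,x) for all x, y ∈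 A₁. -/
/-- Let `A` be a composition algebra over a field of characteristic 3 with an
automorphism `σ` of order dividing 3 preserving the norm `n`, `δ = σ - id`, and fix a
splitting `A = A₀ ⊕ A₁ ⊕ δ(A₁) ⊕ A₂` (with `A₂ = U ⊕ δ(U) ⊕ δ²(U)`).  Then the bilinear
form `nˢ` on `A₀ ⊕ A₁` given by `nˢ(x,y) = b(x,y)` on `A₀`, `nˢ(x,y) = b(x, δ y)` on `A₁`,
and `nˢ(A₀,A₁) = nˢ(A₁,A₀) = 0`, is supersymmetric: symmetric on `A₀ × A₀`, vanishing
between `A₀` and `A₁`, and skew-symmetric on `A₁ × A₁`. -/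
theorem recipe_norm_supersymmetric {F : Type*} [Field F] [CharP F 3]
    {A : Type*} [NonUnitalNonAssocRing A] [Module F A]
    [SMulCommClass F A A] [IsScalarTower F A A]
    (n : QuadraticForm F A) (hnmul : ∀ x y : A, n (x * y) = n x * n y)
    (hnd : ∀ x : A, (∀ y : A, QuadraticMap.polar n x y = 0) → x = 0)
    (σ : A →ₗ[F] A) (hσmul : ∀ x y : A, σ (x * y) = σ x * σ y)
    (hσ3 : σ ∘ₗ σ ∘ₗ σ = LinearMap.id) (hσn : ∀ x : A, n (σ x) = n x)
    (δ : A →ₗ[F] A) (hδ : ∀ x : A, δ x = σ x - x)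
    (A₀ A₁ U : Submodule F A)
    (h₀ : ∀ x ∈ A₀, δ x = 0)
    (h₁inj : ∀ x ∈ A₁, δ x = 0 → x = 0)
    (h₁ker : ∀ x ∈ A₁, δ (δ x) = 0)
    (hUinj : ∀ x ∈ U, δ (δ x) = 0 → x = 0)
    (hint : DirectSum.IsInternal ![A₀, A₁, A₁.map δ, U, U.map δ, U.map (δ ∘ₗ δ)])
    (p₀ p₁ : A →ₗ[F] A)
    (hp₀ : ∀ x ∈ A₀, p₀ x = x)
    (hp₀0 : ∀ x ∈ A₁ ⊔ A₁.map δ ⊔ U ⊔ U.map δ ⊔ U.map (δ ∘ₗ δ), p₀ x = 0)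
    (hp₁ : ∀ x ∈ A₁, p₁ x = x)
    (hp₁0 : ∀ x ∈ A₀ ⊔ A₁.map δ ⊔ U ⊔ U.map δ ⊔ U.map (δ ∘ₗ δ), p₁ x = 0)
    (ns : A → A → F)
    (hns : ∀ x y : A, ns x y =
      QuadraticMap.polar n (p₀ x) (p₀ y) + QuadraticMap.polar n (p₁ x) (δ (p₁ y))) :
    (∀ x ∈ A₀, ∀ y ∈ A₀, ns x y = ns y x) ∧
    (∀ x ∈ A₀, ∀ y ∈ A₁, ns x y = 0 ∧ ns y x = 0) ∧
    (∀ x ∈ A₁, ∀ y ∈ A₁, ns x y = - ns y x) := by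

  have key : ∀ a b : A, QuadraticMap.polar n (σ a) (σ b) = QuadraticMap.polar n a b := by
    intro a b
    simp only [QuadraticMap.polar, ← map_add, hσn]
  have hsum : ∀ a b : A, QuadraticMap.polar n a (δ b) + QuadraticMap.polar n (δ a) b
      + QuadraticMap.polar n (δ a) (δ b) = 0 := by
    intro a b
    have h := key a b
    rw [show σ a = a + δ a by rw [hδ]; abel, show σ b = b + δ b by rw [hδ]; abel] at h
    rw [QuadraticMap.polar_add_left, QuadraticMap.polar_add_right,
      QuadraticMap.polar_add_right] at h
    linear_combination h
  refine ⟨?_, ?_, ?_⟩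
  · intro x hx y hy
    have hx1 : p₁ x = 0 := hp₁0 x (Submodule.mem_sup_left (Submodule.mem_sup_left
      (Submodule.mem_sup_left (Submodule.mem_sup_left hx))))
    have hy1 : p₁ y = 0 := hp₁0 y (Submodule.mem_sup_left (Submodule.mem_sup_left
      (Submodule.mem_sup_left (Submodule.mem_sup_left hy))))
    rw [hns, hns, hp₀ x hx, hp₀ y hy, hx1, hy1]
    simp [QuadraticMap.polar_comm]
  · intro x hx y hy
    have hx1 : p₁ x = 0 := hp₁0 x (Submodule.mem_sup_left (Submodule.mem_sup_left
      (Submodule.mem_sup_left (Submodule.mem_sup_left hx))))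
    have hy0 : p₀ y = 0 := hp₀0 y (Submodule.mem_sup_left (Submodule.mem_sup_left
      (Submodule.mem_sup_left (Submodule.mem_sup_left hy))))
    rw [hns, hns, hx1, hy0]
    simp
  · intro x hx y hy
    have hx0 : p₀ x = 0 := hp₀0 x (Submodule.mem_sup_left (Submodule.mem_sup_left
      (Submodule.mem_sup_left (Submodule.mem_sup_left hx))))
    have hy0 : p₀ y = 0 := hp₀0 y (Submodule.mem_sup_left (Submodule.mem_sup_left
      (Submodule.mem_sup_left (Submodule.mem_sup_left hy))))
    rw [hns, hns, hx0, hy0, hp₁ x hx, hp₁ y hy]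
    have hdd : QuadraticMap.polar n (δ x) (δ y) = 0 := by
      have h := hsum (δ x) y
      rw [h₁ker x hx] at h
      simpa using h
    have h := hsum x y
    rw [hdd, add_zero] at h
    rw [QuadraticMap.polar_comm n (δ x) y] at h
    simp only [QuadraticMap.polar_zero_left]
    linear_combination h
end

section
/- Let F be a field of characteristic 3 and let V₁ be the 2-dimensional representation of the cyclic group C₃ = ⟨σ⟩ over F with basis v₀, v₁ and action σ(v₀) = v₀ + v₁, σ(v₁) = v₁. Let λ: V₁ ⊗ V₁ → F be the linear map with λ(v₀⊗v₀) = 0, λ(v₁⊗v₁) = 0, λ(v₀⊗v₁) = 1, λ(v₁⊗v₀) = −1, and let λ′: F → V₁ ⊗ V₁ send 1 to ½(v₀⊗v₁ − v₁⊗v₀). Then: (a) λ and λ′ are C₃-equivariant (for the diagonal action on V₁ ⊗ V₁ and the trivial action on F); (b) λ∘λ′ = id_F; (c) λ∘c = −λ, where c: V₁⊗V₁ → V₁⊗V₁ is the swap x⊗y ↦ y⊗x; (d) the subspace of symmetric tensors in V₁ ⊗ V₁ is a 3-dimensional C₃-submodule on which (σ − id)² ≠ 0 (a copy of the regular representation V₂),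 the subspace of skew-symmetric tensors is a 1-dimensional trivial submodule, and V₁ ⊗ V₁ is their direct sum. -/
open TensorProduct

/-- Over a field of characteristic 3, let `V₁` be the 2-dimensional
indecomposable representation of `C₃ = ⟨σ⟩`, with basis `v0, v1`, `σ v0 = v0 + v1`,
`σ v1 = v1`.  Let `λ : V₁ ⊗ V₁ → F` have `λ(v0⊗v0) = λ(v1⊗v1) = 0`, `λ(v0⊗v1) = 1`,
`λ(v1⊗v0) = -1`, and let `λ' : F → V₁ ⊗ V₁` send `1` to `½(v0⊗v1 - v1⊗v0)`.  Then:
(a) `λ` and `λ'` are equivariant; (b) `λ ∘ λ' = id`; (c) `λ ∘ c = -λ` for the swap `c`;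
(d) the symmetric tensors form a 3-dimensional submodule invariant under `σ ⊗ σ` on which
`(σ⊗σ - id)² ≠ 0` (a copy of the regular representation), the skew-symmetric tensors form
a 1-dimensional trivial submodule, and `V₁ ⊗ V₁` is their direct sum. -/
theorem lambda_properties_V1_tensor_V1 {F : Type*} [Field F] [CharP F 3]
    {V : Type*} [AddCommGroup V] [Module F V]
    (v0 v1 : V)
    (hind : LinearIndependent F ![v0, v1])
    (hspan : Submodule.span F {v0, v1} = ⊤)
    (σ : V →ₗ[F] V) (hσ0 : σ v0 = v0 + v1) (hσ1 : σ v1 = v1)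
    (lam : V ⊗[F] V →ₗ[F] F)
    (h00 : lam (v0 ⊗ₜ[F] v0) = 0) (h11 : lam (v1 ⊗ₜ[F] v1) = 0)
    (h01 : lam (v0 ⊗ₜ[F] v1) = 1) (h10 : lam (v1 ⊗ₜ[F] v0) = -1)
    (lam' : F →ₗ[F] V ⊗[F] V)
    (hlam' : lam' 1 = (2⁻¹ : F) • (v0 ⊗ₜ[F] v1 - v1 ⊗ₜ[F] v0)) :
    -- (a) equivariance
    (∀ t : V ⊗[F] V, lam (TensorProduct.map σ σ t) = lam t) ∧
    (∀ c : F, TensorProduct.map σ σ (lam' c) = lam' c) ∧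
    -- (b) λ ∘ λ' = id
    (∀ c : F, lam (lam' c) = c) ∧
    -- (c) λ ∘ swap = -λ
    (∀ t : V ⊗[F] V, lam (TensorProduct.comm F V V t) = - lam t) ∧
    -- (d) symmetric and skew-symmetric tensors
    (let c : V ⊗[F] V →ₗ[F] V ⊗[F] V := (TensorProduct.comm F V V).toLinearMap
     let Sym : Submodule F (V ⊗[F] V) := LinearMap.ker (c - LinearMap.id)
     let Skew : Submodule F (V ⊗[F] V) := LinearMap.ker (c + LinearMap.id)
     let d : V ⊗[F] V →ₗ[F] V ⊗[F] V := TensorProduct.map σ σ - LinearMap.id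
     Sym.map (TensorProduct.map σ σ) ≤ Sym ∧
     Module.finrank F Sym = 3 ∧
     (∃ t ∈ Sym, d (d t) ≠ 0) ∧
     Module.finrank F Skew = 1 ∧
     (∀ t ∈ Skew, TensorProduct.map σ σ t = t) ∧
     Sym ⊓ Skew = ⊥ ∧ Sym ⊔ Skew = ⊤) := by
  have h3 : (3 : F) = 0 := by exact_mod_cast CharP.cast_eq_zero F 3
  have h2 : (2 : F) ≠ 0 := by
    intro h
    exact one_ne_zero (by linear_combination h3 - h : (1:F) = 0)
  have hrange : Set.range ![v0, v1] = {v0, v1} := by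
    ext x
    simp [Fin.exists_fin_two, eq_comm, or_comm]
  let b : Module.Basis (Fin 2) F V := Module.Basis.mk hind (by rw [hrange, hspan])
  have hb0 : b 0 = v0 := by simp [b]
  have hb1 : b 1 = v1 := by simp [b]
  let T : Module.Basis (Fin 2 × Fin 2) F (V ⊗[F] V) := Module.Basis.tensorProduct b b
  have hT : ∀ i j, T (i, j) = b i ⊗ₜ[F] b j := fun i j => Module.Basis.tensorProduct_apply b b i j
  -- (a1)
  have ha1 : ∀ t : V ⊗[F] V, lam (TensorProduct.map σ σ t) = lam t := by
    have : lam ∘ₗ TensorProduct.map σ σ = lam := by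
      apply Module.Basis.ext T
      rintro ⟨i, j⟩
      fin_cases i <;> fin_cases j <;>
        simp [hT, hb0, hb1, hσ0, hσ1, tmul_add, add_tmul, h00, h01, h10, h11]
    exact fun t => LinearMap.congr_fun this t
  -- σ⊗σ fixes w := v0⊗v1 - v1⊗v0
  have hmw : TensorProduct.map σ σ (v0 ⊗ₜ[F] v1 - v1 ⊗ₜ[F] v0) = v0 ⊗ₜ[F] v1 - v1 ⊗ₜ[F] v0 := by
    simp only [map_sub, TensorProduct.map_tmul, hσ0, hσ1, add_tmul, tmul_add]
    abel
  -- (a2)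
  have ha2 : ∀ c : F, TensorProduct.map σ σ (lam' c) = lam' c := by
    intro c
    have hc : lam' c = c • lam' 1 := by rw [← map_smul, smul_eq_mul, mul_one]
    rw [hc, hlam', map_smul, map_smul, hmw]
  -- (b)
  have hb : ∀ c : F, lam (lam' c) = c := by
    intro c
    have hc : lam' c = c • lam' 1 := by rw [← map_smul, smul_eq_mul, mul_one]
    rw [hc, hlam', map_smul, map_smul, map_sub, h01, h10]
    simp only [smul_eq_mul]
    field_simp
    ring
  -- (c)
  have hc : ∀ t : V ⊗[F] V, lam (TensorProduct.comm F V V t) = - lam t := by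
    have : lam ∘ₗ (TensorProduct.comm F V V).toLinearMap = -lam := by
      apply Module.Basis.ext T
      rintro ⟨i, j⟩
      fin_cases i <;> fin_cases j <;>
        simp [hT, hb0, hb1, h00, h01, h10, h11]
    exact fun t => LinearMap.congr_fun this t
  -- part (d) setup
  set w : V ⊗[F] V := v0 ⊗ₜ[F] v1 - v1 ⊗ₜ[F] v0 with hw
  let cL : V ⊗[F] V →ₗ[F] V ⊗[F] V := (TensorProduct.comm F V V).toLinearMap
  have hcc : ∀ t : V ⊗[F] V, cL (cL t) = t := by
    intro t
    induction t using TensorProduct.induction_on with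
    | zero => simp
    | tmul x y => simp [cL]
    | add x y hx hy => simp [map_add, hx, hy]
  have hcomm : ∀ t, cL (TensorProduct.map σ σ t) = TensorProduct.map σ σ (cL t) := by
    intro t
    induction t using TensorProduct.induction_on with
    | zero => simp
    | tmul x y => simp [cL]
    | add x y hx hy => simp [map_add, hx, hy]
  -- finite dimensionality
  haveI : Module.Finite F V := Module.Finite.of_basis b
  haveI : Module.Finite F (V ⊗[F] V) := Module.Finite.of_basis T
  -- repr of comm
  have hrepr : ∀ (t : V ⊗[F] V) (p : Fin 2 × Fin 2), T.repr (cL t) p = T.repr t (p.2, p.1) := by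
    intro t p
    have key : (Finsupp.lapply p ∘ₗ (T.repr.toLinearMap ∘ₗ cL))
        = (Finsupp.lapply (p.2, p.1) ∘ₗ T.repr.toLinearMap) := by
      apply Module.Basis.ext T
      rintro ⟨i, j⟩
      obtain ⟨p1, p2⟩ := p
      simp [hT, cL, T, Module.Basis.tensorProduct_repr_tmul_apply, Finsupp.single_apply, Module.Basis.repr_self]
      fin_cases i <;> fin_cases j <;> fin_cases p1 <;> fin_cases p2 <;> simp
    exact LinearMap.congr_fun key t
  have hsum : ∀ t : V ⊗[F] V, t = T.repr t (0,0) • T (0,0) + T.repr t (0,1) • T (0,1)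
      + T.repr t (1,0) • T (1,0) + T.repr t (1,1) • T (1,1) := by
    intro t
    have := Module.Basis.sum_repr T t
    rw [Fintype.sum_prod_type] at this
    simpa [Fin.sum_univ_two, add_assoc] using this.symm
  have hT00 : T (0,0) = v0 ⊗ₜ[F] v0 := by rw [hT, hb0]
  have hT01 : T (0,1) = v0 ⊗ₜ[F] v1 := by rw [hT, hb0, hb1]
  have hT10 : T (1,0) = v1 ⊗ₜ[F] v0 := by rw [hT, hb0, hb1]
  have hT11 : T (1,1) = v1 ⊗ₜ[F] v1 := by rw [hT, hb1]
  set idT : V ⊗[F] V →ₗ[F] V ⊗[F] V := LinearMap.id with hidT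
  -- Skew ≤ span {w}
  have hwSkew : (cL + idT) w = 0 := by
    simp only [LinearMap.add_apply, hidT, LinearMap.id_apply, cL, hw, map_sub,
      LinearEquiv.coe_coe, TensorProduct.comm_tmul]
    abel
  have hskew_le : LinearMap.ker (cL + idT) ≤ Submodule.span F {w} := by
    intro t ht
    have h1 : cL t = -t := by
      have h := LinearMap.mem_ker.mp ht
      simp only [LinearMap.add_apply, hidT, LinearMap.id_apply] at h
      exact eq_neg_of_add_eq_zero_left h
    have hco : ∀ p : Fin 2 × Fin 2, T.repr t (p.2, p.1) = - T.repr t p := by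
      intro p
      rw [← hrepr t p, h1, map_neg]
      simp
    have e00 : T.repr t (0,0) = 0 := by
      have h' := hco (0,0)
      have h2x : (2:F) * T.repr t (0,0) = 0 := by linear_combination h'
      exact (mul_eq_zero.mp h2x).resolve_left h2
    have e11 : T.repr t (1,1) = 0 := by
      have h' := hco (1,1)
      have h2x : (2:F) * T.repr t (1,1) = 0 := by linear_combination h'
      exact (mul_eq_zero.mp h2x).resolve_left h2
    have e10 : T.repr t (1,0) = - T.repr t (0,1) := hco (0,1)
    rw [Submodule.mem_span_singleton]
    have ht' := hsum t
    rw [e00, e11, e10, hT01, hT10] at ht'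
    set r := T.repr t (0,1) with hr
    refine ⟨r, ?_⟩
    rw [hw, smul_sub, ht']
    simp only [zero_smul, neg_smul, zero_add, add_zero]
    abel
  have hwne : w ≠ 0 := by
    intro h
    have := congrArg (fun x => T.repr x (0,1)) h
    simp only [hw, ← hT01, ← hT10, map_sub, Finsupp.sub_apply, Module.Basis.repr_self, map_zero,
      Finsupp.coe_zero, Pi.zero_apply, Finsupp.single_apply] at this
    norm_num at this
  have hwmem : w ∈ LinearMap.ker (cL + idT) := LinearMap.mem_ker.mpr hwSkew
  have hskew_eq : LinearMap.ker (cL + idT) = Submodule.span F {w} :=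
    le_antisymm hskew_le ((Submodule.span_singleton_le_iff_mem _ _).mpr hwmem)
  have hfrSkew : Module.finrank F (LinearMap.ker (cL + idT)) = 1 := by
    rw [hskew_eq]
    exact finrank_span_singleton hwne
  -- trivial action on Skew
  have hskew_triv : ∀ t ∈ LinearMap.ker (cL + idT), TensorProduct.map σ σ t = t := by
    intro t ht
    obtain ⟨s, rfl⟩ := Submodule.mem_span_singleton.mp (hskew_le ht)
    rw [map_smul, hmw]
  -- Sym invariant
  have hsym_inv : (LinearMap.ker (cL - idT)).map (TensorProduct.map σ σ)
      ≤ LinearMap.ker (cL - idT) := by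
    rintro y ⟨t, ht, rfl⟩
    have h1 : cL t = t := by
      have h := LinearMap.mem_ker.mp ht
      simp only [LinearMap.sub_apply, hidT, LinearMap.id_apply, sub_eq_zero] at h
      exact h
    rw [LinearMap.mem_ker]
    simp only [LinearMap.sub_apply, hidT, LinearMap.id_apply, hcomm, h1, sub_self]
  -- Sym ⊓ Skew = ⊥
  have hinf : LinearMap.ker (cL - idT) ⊓ LinearMap.ker (cL + idT) = ⊥ := by
    rw [Submodule.eq_bot_iff]
    rintro t ⟨hs1, hs2⟩
    have h1' : cL t = t := by
      have h := LinearMap.mem_ker.mp hs1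
      simpa [LinearMap.sub_apply, hidT, sub_eq_zero] using h
    have h2'' : cL t + t = 0 := by
      have h := LinearMap.mem_ker.mp hs2
      simpa [hidT] using h
    rw [h1'] at h2''
    have h2t : (2:F) • t = 0 := by rw [two_smul]; exact h2''
    exact (smul_eq_zero.mp h2t).resolve_left h2
  -- Sym ⊔ Skew = ⊤
  have hsup : LinearMap.ker (cL - idT) ⊔ LinearMap.ker (cL + idT) = ⊤ := by
    rw [eq_top_iff]
    intro t _
    have hdecomp : t = (2⁻¹ : F) • (t + cL t) + (2⁻¹ : F) • (t - cL t) := by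
      have h2' : (2⁻¹ : F) + 2⁻¹ = 1 := by
        field_simp
        ring
      rw [smul_add, smul_sub]
      rw [show (2⁻¹:F) • t + (2⁻¹:F) • cL t + ((2⁻¹:F) • t - (2⁻¹:F) • cL t)
          = ((2⁻¹:F) + 2⁻¹) • t by rw [add_smul]; abel]
      rw [h2', one_smul]
    have hm1 : (2⁻¹ : F) • (t + cL t) ∈ LinearMap.ker (cL - idT) := by
      rw [LinearMap.mem_ker]
      simp only [LinearMap.sub_apply, hidT, LinearMap.id_apply, map_smul, map_add, hcc]
      module
    have hm2 : (2⁻¹ : F) • (t - cL t) ∈ LinearMap.ker (cL + idT) := by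
      rw [LinearMap.mem_ker]
      simp only [LinearMap.add_apply, hidT, LinearMap.id_apply, map_smul, map_sub, hcc]
      module
    rw [hdecomp]
    exact Submodule.add_mem_sup hm1 hm2
  -- finrank Sym = 3
  have hfrTop : Module.finrank F (V ⊗[F] V) = 4 := by
    rw [Module.finrank_eq_card_basis T]
    simp
  have hfrSym : Module.finrank F (LinearMap.ker (cL - idT)) = 3 := by
    have key := Submodule.finrank_sup_add_finrank_inf_eq
      (LinearMap.ker (cL - idT)) (LinearMap.ker (cL + idT))
    rw [hsup, hinf, hfrSkew, finrank_top, hfrTop, finrank_bot] at key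
    omega
  -- existence of t in Sym with d (d t) ≠ 0
  have hexists : ∃ t ∈ LinearMap.ker (cL - idT),
      (TensorProduct.map σ σ - idT) ((TensorProduct.map σ σ - idT) t) ≠ 0 := by
    refine ⟨v0 ⊗ₜ[F] v0, ?_, ?_⟩
    · rw [LinearMap.mem_ker]
      simp [LinearMap.sub_apply, hidT, cL]
    · have hd1 : (TensorProduct.map σ σ - idT) (v0 ⊗ₜ[F] v0)
          = v0 ⊗ₜ[F] v1 + v1 ⊗ₜ[F] v0 + v1 ⊗ₜ[F] v1 := by
        simp only [LinearMap.sub_apply, hidT, LinearMap.id_apply, TensorProduct.map_tmul,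
          hσ0, hσ1, add_tmul, tmul_add]
        abel
      rw [hd1]
      have hd2 : (TensorProduct.map σ σ - idT) (v0 ⊗ₜ[F] v1 + v1 ⊗ₜ[F] v0 + v1 ⊗ₜ[F] v1)
          = (3:F) • (v1 ⊗ₜ[F] v1) - v1 ⊗ₜ[F] v1 := by
        simp only [LinearMap.sub_apply, hidT, LinearMap.id_apply, map_add,
          TensorProduct.map_tmul, hσ0, hσ1, add_tmul, tmul_add]
        rw [show (3:F) • (v1 ⊗ₜ[F] v1) = v1 ⊗ₜ[F] v1 + v1 ⊗ₜ[F] v1 + v1 ⊗ₜ[F] v1 by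
          rw [show (3:F) = 1 + 1 + 1 by norm_num, add_smul, add_smul, one_smul]]
        abel
      rw [hd2, h3, zero_smul, zero_sub, neg_ne_zero, ← hT11]
      exact T.ne_zero (1,1)
  exact ⟨ha1, ha2, hb, hc, hsym_inv, hfrSym, hexists, hfrSkew, hskew_triv, hinf, hsup⟩
end
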